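/- arXiv:1407.7125 — 2 statements merged into one kernel-verified Lean document; each statement's English description precedes it below -/
import Mathlib

section
/- Let T and T' be rooted binary phylogenetic trees on the same leaf set X with |X| ≥ 3. If for every set {a,b,c} of three distinct leaves the triple topology of T on {a,b,c} equals that of T' on {a,b,c}, then T and T' are isomorphic as leaf-labeled rooted trees. -/
open SimpleGraph

/-- A rooted binary phylogenetic tree with leaves labelled by `X`. -/
structure BinPhylo (X : Type) where
  V : Type
  finV : Finite V
  G : SimpleGraph V
  tree : G.IsTree
  root : V
  leaf : X → V
  leafInj : Function.Injective leaf
  degLeaf : ∀ x : X, (G.neighborSet (leaf x)).ncard = 1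
  degRoot : (G.neighborSet root).ncard = 2
  degInt : ∀ v : V, v ∉ Set.range leaf → v ≠ root → (G.neighborSet v).ncard = 3

namespace BinPhylo

variable {X : Type}

/-- `u` is a (weak) ancestor of `v`: `u` lies on the unique path from `v` to the root. -/
def anc (T : BinPhylo X) (u v : T.V) : Prop :=
  ∃ p : T.G.Walk v T.root, p.IsPath ∧ u ∈ p.support

/-- The triple topology `ab|c`: the path from `c` to the root and the path from
`a` to `b` are vertex-disjoint. -/
def trip (T : BinPhylo X) (a b c : X) : Prop :=
  ∃ (p : T.G.Walk (T.leaf c) T.root) (q : T.G.Walk (T.leaf a) (T.leaf b)),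
    p.IsPath ∧ q.IsPath ∧ ∀ v ∈ p.support, v ∉ q.support

/-- Vertices of the minimal subtree of `T` connecting the leaves in `L`. -/
def span (T : BinPhylo X) (L : Set X) : Set T.V :=
  {v | ∃ a ∈ L, ∃ b ∈ L, ∃ p : T.G.Walk (T.leaf a) (T.leaf b), p.IsPath ∧ v ∈ p.support}

end BinPhylo

namespace BinPhylo

attribute [local instance] Classical.propDecidable

variable {X : Type} (T : BinPhylo X)

/-- The unique path between two vertices. -/
noncomputable def pth (u v : T.V) : T.G.Walk u v := (T.tree.existsUnique_path u v).choose

lemma pth_isPath (u v : T.V) : (T.pth u v).IsPath := (T.tree.existsUnique_path u v).choose_spec.1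

lemma pth_eq {u v : T.V} {p : T.G.Walk u v} (hp : p.IsPath) : p = T.pth u v :=
  (T.tree.existsUnique_path u v).choose_spec.2 p hp

/-- `le u v` : `v` is a (weak) ancestor of `u`. -/
def le (u v : T.V) : Prop := v ∈ (T.pth u T.root).support

lemma le_refl (u : T.V) : T.le u u := SimpleGraph.Walk.start_mem_support _

lemma le_root (u : T.V) : T.le u T.root := SimpleGraph.Walk.end_mem_support _

lemma pth_drop {u v : T.V} (h : T.le u v) :
    (T.pth u T.root).dropUntil v h = T.pth v T.root :=
  T.pth_eq ((T.pth_isPath u T.root).dropUntil h)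

lemma le_trans {u v w : T.V} (h1 : T.le u v) (h2 : T.le v w) : T.le u w := by
  have := SimpleGraph.Walk.support_dropUntil_subset (T.pth u T.root) h1
  rw [T.pth_drop h1] at this
  exact this h2

lemma le_antisymm {u v : T.V} (h1 : T.le u v) (h2 : T.le v u) : u = v := by
  classical
  by_contra hne
  have hsplit := SimpleGraph.Walk.take_spec (T.pth u T.root) h1
  have hnd : ((T.pth u T.root).support).Nodup := (T.pth_isPath u T.root).support_nodup
  rw [← hsplit] at hnd
  rw [SimpleGraph.Walk.support_append] at hnd
  have hdisj := (List.nodup_append'.mp hnd).2.2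
  have hu1 : u ∈ ((T.pth u T.root).takeUntil v h1).support := SimpleGraph.Walk.start_mem_support _
  have hu2 : u ∈ ((T.pth u T.root).dropUntil v h1).support := by
    rw [T.pth_drop h1]; exact h2
  rw [SimpleGraph.Walk.support_eq_cons] at hu2
  rcases List.mem_cons.mp hu2 with hu2 | hu2
  · exact hne hu2
  · exact hdisj hu1 hu2

lemma le_total_of_le {v u w : T.V} (h1 : T.le v u) (h2 : T.le v w) : T.le u w ∨ T.le w u := by
  classical
  set p := T.pth v T.root with hp
  by_cases hw : w ∈ (p.dropUntil u h1).support
  · left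
    rw [T.pth_drop h1] at hw
    exact hw
  · right
    have hw' : w ∈ (p.takeUntil u h1).support := by
      have h2' : w ∈ p.support := h2
      rw [← SimpleGraph.Walk.take_spec p h1, SimpleGraph.Walk.mem_support_append_iff] at h2'
      tauto
    have hsplit : ((p.takeUntil u h1).takeUntil w hw').append
        (((p.takeUntil u h1).dropUntil w hw').append (p.dropUntil u h1)) = p := by
      rw [SimpleGraph.Walk.append_assoc, SimpleGraph.Walk.take_spec,
        SimpleGraph.Walk.take_spec p h1]
    have hq : (((p.takeUntil u h1).dropUntil w hw').append (p.dropUntil u h1)).IsPath := by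
      have : p.IsPath := T.pth_isPath v T.root
      rw [← hsplit] at this
      exact this.of_append_right
    have : (((p.takeUntil u h1).dropUntil w hw').append (p.dropUntil u h1)) = T.pth w T.root :=
      T.pth_eq hq
    show u ∈ _
    rw [← this, SimpleGraph.Walk.mem_support_append_iff]
    right
    exact SimpleGraph.Walk.start_mem_support _

lemma rank_anti {u v : T.V} (h : T.le u v) :
    (T.pth v T.root).length ≤ (T.pth u T.root).length := by
  rw [← T.pth_drop h]
  exact SimpleGraph.Walk.length_dropUntil_le _ h

lemma rank_strict {u v : T.V} (h : T.le u v) (hne : u ≠ v) :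
    (T.pth v T.root).length < (T.pth u T.root).length := by
  have hsplit := SimpleGraph.Walk.take_spec (T.pth u T.root) h
  have hlen : ((T.pth u T.root).takeUntil v h).length + ((T.pth u T.root).dropUntil v h).length
      = (T.pth u T.root).length := by
    rw [← SimpleGraph.Walk.length_append, hsplit]
  rw [T.pth_drop h] at hlen
  have hpos : 0 < ((T.pth u T.root).takeUntil v h).length := by
    rcases Nat.eq_zero_or_pos ((T.pth u T.root).takeUntil v h).length with h0 | h0
    · exact absurd (SimpleGraph.Walk.eq_of_length_eq_zero h0) hne
    · exact h0
  omega

lemma eq_of_le_rank {u v : T.V} (h : T.le u v)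
    (hr : (T.pth u T.root).length ≤ (T.pth v T.root).length) : u = v := by
  by_contra hne
  exact absurd hr (not_le.mpr (T.rank_strict h hne))

/-- `m` is the most recent common ancestor of `u` and `v`. -/
def isMrca (u v m : T.V) : Prop :=
  T.le u m ∧ T.le v m ∧ ∀ w, T.le u w → T.le v w → T.le m w

lemma exists_isMrca (u v : T.V) : ∃ m, T.isMrca u v m := by
  classical
  haveI := T.finV
  set S : Set T.V := {w | T.le u w ∧ T.le v w} with hS
  have hfin : S.Finite := Set.toFinite S
  have hne : S.Nonempty := ⟨T.root, T.le_root u, T.le_root v⟩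
  obtain ⟨m, hm, hmax⟩ := Set.Finite.exists_maximalFor
    (fun w => (T.pth w T.root).length) S hfin hne
  refine ⟨m, hm.1, hm.2, fun w hw1 hw2 => ?_⟩
  rcases T.le_total_of_le hm.1 hw1 with h | h
  · exact h
  · have : (T.pth m T.root).length = (T.pth w T.root).length :=
      _root_.le_antisymm (T.rank_anti h) (hmax ⟨hw1, hw2⟩ (T.rank_anti h))
    have : w = m := T.eq_of_le_rank h (le_of_eq this.symm)
    subst this
    exact T.le_refl w

noncomputable def mrca (u v : T.V) : T.V := (T.exists_isMrca u v).choose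

lemma mrca_spec (u v : T.V) : T.isMrca u v (T.mrca u v) := (T.exists_isMrca u v).choose_spec

lemma le_mrca_left (u v : T.V) : T.le u (T.mrca u v) := (T.mrca_spec u v).1
lemma le_mrca_right (u v : T.V) : T.le v (T.mrca u v) := (T.mrca_spec u v).2.1
lemma mrca_le {u v w : T.V} (h1 : T.le u w) (h2 : T.le v w) : T.le (T.mrca u v) w :=
  (T.mrca_spec u v).2.2 w h1 h2

lemma isMrca_unique {u v m : T.V} (h : T.isMrca u v m) : m = T.mrca u v :=
  T.le_antisymm (h.2.2 _ (T.le_mrca_left u v) (T.le_mrca_right u v))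
    (T.mrca_le h.1 h.2.1)

lemma mrca_comm (u v : T.V) : T.mrca u v = T.mrca v u :=
  T.isMrca_unique ⟨T.le_mrca_right u v, T.le_mrca_left u v, fun w h1 h2 => T.mrca_le h2 h1⟩

lemma mrca_self (u : T.V) : T.mrca u u = u :=
  (T.isMrca_unique ⟨T.le_refl u, T.le_refl u, fun _ h _ => h⟩).symm

/-- Interior vertices of a path have at least two neighbours. -/
lemma two_le_degree_of_interior {u r v : T.V} (p : T.G.Walk u r) (hp : p.IsPath)
    (hv : v ∈ p.support) (hvu : v ≠ u) (hvr : v ≠ r) :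
    2 ≤ (T.G.neighborSet v).ncard := by
  classical
  haveI := T.finV
  have hsplit := SimpleGraph.Walk.take_spec p hv
  set t := p.takeUntil v hv with ht
  set d := p.dropUntil v hv with hd
  -- next neighbour from d
  have hdnil : ¬ d.Nil := by
    intro h
    exact hvr (SimpleGraph.Walk.Nil.eq h)
  have htnil : ¬ t.reverse.Nil := by
    intro h
    exact hvu (SimpleGraph.Walk.Nil.eq h)
  obtain ⟨x1, hx1adj, d', hd'⟩ := SimpleGraph.Walk.not_nil_iff.mp hdnil
  obtain ⟨x2, hx2adj, t', ht'⟩ := SimpleGraph.Walk.not_nil_iff.mp htnil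
  have hx1mem : x1 ∈ d.support.tail := by
    rw [hd']
    simp [SimpleGraph.Walk.support_cons]
  have hx2mem : x2 ∈ t.support := by
    have : x2 ∈ t.reverse.support := by
      rw [ht']
      simp [SimpleGraph.Walk.support_cons]
    rwa [SimpleGraph.Walk.support_reverse, List.mem_reverse] at this
  have hnd : (t.support ++ d.support.tail).Nodup := by
    rw [← SimpleGraph.Walk.support_append, hsplit]
    exact hp.support_nodup
  have hne12 : x1 ≠ x2 := by
    intro h
    exact (List.nodup_append'.mp hnd).2.2 hx2mem (h ▸ hx1mem)
  have hsub : {x1, x2} ⊆ T.G.neighborSet v := by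
    intro y hy
    rcases hy with rfl | hy
    · exact hx1adj
    · rcases hy with rfl
      exact hx2adj
  calc 2 = ({x1, x2} : Set T.V).ncard := by
        rw [Set.ncard_pair hne12]
    _ ≤ (T.G.neighborSet v).ncard := Set.ncard_le_ncard hsub (Set.toFinite _)

lemma root_not_leaf (x : X) : T.leaf x ≠ T.root := by
  intro h
  have h1 := T.degLeaf x
  have h2 := T.degRoot
  rw [h] at h1
  omega

/-- Leaves are minimal: nothing is strictly below a leaf. -/
lemma le_leaf {u : T.V} {x : X} (h : T.le u (T.leaf x)) : u = T.leaf x := by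
  by_contra hne
  have := T.two_le_degree_of_interior (T.pth u T.root) (T.pth_isPath u T.root) h
    (Ne.symm hne) (T.root_not_leaf x)
  have h1 := T.degLeaf x
  omega
lemma mem_takeUntil_iff {u v x : T.V} (h : T.le u v) :
    x ∈ ((T.pth u T.root).takeUntil v h).support ↔ T.le u x ∧ T.le x v := by
  classical
  constructor
  · intro hx
    have hx' : T.le u x := SimpleGraph.Walk.support_takeUntil_subset _ h hx
    refine ⟨hx', ?_⟩
    rcases T.le_total_of_le hx' h with h1 | h1
    · exact h1
    · -- le v x : then x ∈ supp (dropUntil v), combined with x ∈ take, x = v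
      have hx2 : x ∈ ((T.pth u T.root).dropUntil v h).support := by
        rw [T.pth_drop h]; exact h1
      have hnd : (((T.pth u T.root).takeUntil v h).support ++
          ((T.pth u T.root).dropUntil v h).support.tail).Nodup := by
        rw [← SimpleGraph.Walk.support_append, SimpleGraph.Walk.take_spec (T.pth u T.root) h]
        exact (T.pth_isPath u T.root).support_nodup
      rw [SimpleGraph.Walk.support_eq_cons] at hx2
      rcases List.mem_cons.mp hx2 with hx2 | hx2
      · subst hx2; exact T.le_refl x
      · exact absurd hx2 (fun hh => (List.nodup_append'.mp hnd).2.2 hx hh)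
  · rintro ⟨h1, h2⟩
    have hx : x ∈ (T.pth u T.root).support := h1
    rw [← SimpleGraph.Walk.take_spec (T.pth u T.root) h,
      SimpleGraph.Walk.mem_support_append_iff] at hx
    rcases hx with hx | hx
    · exact hx
    · rw [T.pth_drop h] at hx
      have : x = v := T.le_antisymm h2 hx
      subst this
      exact SimpleGraph.Walk.end_mem_support _

/-- The canonical path between `u` and `v` through their mrca. -/
lemma pth_eq_mrca (u v : T.V) :
    ∃ (hu : T.le u (T.mrca u v)) (hv : T.le v (T.mrca u v)),
      T.pth u v = ((T.pth u T.root).takeUntil (T.mrca u v) hu).append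
        ((T.pth v T.root).takeUntil (T.mrca u v) hv).reverse := by
  classical
  refine ⟨T.le_mrca_left u v, T.le_mrca_right u v, ?_⟩
  set m := T.mrca u v with hm
  set t1 := (T.pth u T.root).takeUntil m (T.le_mrca_left u v) with ht1
  set t2 := (T.pth v T.root).takeUntil m (T.le_mrca_right u v) with ht2
  have key : ∀ x, x ∈ t1.support → x ∈ t2.support → x = m := by
    intro x h1 h2
    rw [ht1, T.mem_takeUntil_iff] at h1
    rw [ht2, T.mem_takeUntil_iff] at h2
    exact T.le_antisymm h1.2 (T.mrca_le h1.1 h2.1)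
  symm
  apply T.pth_eq
  rw [SimpleGraph.Walk.isPath_def, SimpleGraph.Walk.support_append, List.nodup_append']
  refine ⟨(T.pth_isPath u T.root).takeUntil _ |>.support_nodup, ?_, ?_⟩
  · have h2 : t2.reverse.IsPath := ((T.pth_isPath v T.root).takeUntil _).reverse
    have h3 : t2.reverse.support.Nodup := h2.support_nodup
    exact h3.tail
  · intro x hx1 hx2
    have hx2' : x ∈ t2.reverse.support := List.mem_of_mem_tail hx2
    rw [SimpleGraph.Walk.support_reverse, List.mem_reverse] at hx2'
    have : x = m := key x hx1 hx2'
    subst this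
    have : t2.reverse.support = m :: t2.reverse.support.tail :=
      SimpleGraph.Walk.support_eq_cons _
    have hnd : t2.reverse.support.Nodup :=
      (((T.pth_isPath v T.root).takeUntil _).reverse).support_nodup
    rw [this] at hnd
    exact (List.nodup_cons.mp hnd).1 hx2

lemma mem_pth_iff {u v x : T.V} :
    x ∈ (T.pth u v).support ↔
      (T.le u x ∧ T.le x (T.mrca u v)) ∨ (T.le v x ∧ T.le x (T.mrca u v)) := by
  classical
  obtain ⟨hu, hv, hval⟩ := T.pth_eq_mrca u v
  rw [hval, SimpleGraph.Walk.mem_support_append_iff, SimpleGraph.Walk.support_reverse,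
    List.mem_reverse, T.mem_takeUntil_iff, T.mem_takeUntil_iff]

/-- The fundamental characterisation of the triple topology. -/
lemma trip_iff (a b c : X) :
    T.trip a b c ↔ ¬ T.le (T.leaf c) (T.mrca (T.leaf a) (T.leaf b)) := by
  constructor
  · rintro ⟨p, q, hp, hq, hdisj⟩ hle
    rw [T.pth_eq hp] at hdisj
    rw [T.pth_eq hq] at hdisj
    refine hdisj (T.mrca (T.leaf a) (T.leaf b)) hle ?_
    rw [T.mem_pth_iff]
    exact Or.inl ⟨T.le_mrca_left _ _, T.le_refl _⟩
  · intro hnle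
    refine ⟨T.pth (T.leaf c) T.root, T.pth (T.leaf a) (T.leaf b),
      T.pth_isPath _ _, T.pth_isPath _ _, ?_⟩
    intro v hvp hvq
    rw [T.mem_pth_iff] at hvq
    have hcv : T.le (T.leaf c) v := hvp
    have : T.le v (T.mrca (T.leaf a) (T.leaf b)) := by tauto
    exact hnle (T.le_trans hcv this)
/-- `w` is the parent of `v`. -/
def parent (v w : T.V) : Prop :=
  T.le v w ∧ v ≠ w ∧ ∀ u, T.le v u → u = v ∨ T.le w u

lemma le_root_eq {u : T.V} (h : T.le T.root u) : u = T.root := by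
  have hnil : (SimpleGraph.Walk.nil : T.G.Walk T.root T.root).IsPath := SimpleGraph.Walk.IsPath.nil
  have := T.pth_eq hnil
  have h2 : u ∈ (SimpleGraph.Walk.nil : T.G.Walk T.root T.root).support := by
    rw [this]; exact h
  have : u = T.root := by simpa using h2
  exact this

lemma adj_le_or {v w : T.V} (h : T.G.Adj v w) : T.le v w ∨ T.le w v := by
  classical
  by_cases hv : v ∈ (T.pth w T.root).support
  · exact Or.inr hv
  · left
    have hpath : (SimpleGraph.Walk.cons h (T.pth w T.root)).IsPath :=
      SimpleGraph.Walk.IsPath.cons (T.pth_isPath w T.root) hv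
    have := T.pth_eq hpath
    show w ∈ (T.pth v T.root).support
    rw [← this, SimpleGraph.Walk.support_cons]
    exact List.mem_cons_of_mem _ (SimpleGraph.Walk.start_mem_support _)

lemma adj_parent {v w : T.V} (h : T.G.Adj v w) (hle : T.le v w) : T.parent v w := by
  classical
  have hne : v ≠ w := h.ne
  have hv : v ∉ (T.pth w T.root).support := by
    intro hv
    exact hne (T.le_antisymm hle hv)
  have hpath : (SimpleGraph.Walk.cons h (T.pth w T.root)).IsPath :=
    SimpleGraph.Walk.IsPath.cons (T.pth_isPath w T.root) hv
  have heq := T.pth_eq hpath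
  refine ⟨hle, hne, fun u hu => ?_⟩
  have : u ∈ (SimpleGraph.Walk.cons h (T.pth w T.root)).support := by rw [heq]; exact hu
  rw [SimpleGraph.Walk.support_cons] at this
  rcases List.mem_cons.mp this with h1 | h1
  · exact Or.inl h1
  · exact Or.inr h1

lemma parent_adj {v w : T.V} (h : T.parent v w) : T.G.Adj v w := by
  classical
  obtain ⟨hle, hne, hall⟩ := h
  have hvroot : v ≠ T.root := by
    intro hv
    subst hv
    exact hne (T.le_root_eq hle).symm
  have hnnil : ¬ (T.pth v T.root).Nil := SimpleGraph.Walk.not_nil_of_ne hvroot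
  obtain ⟨x, hadj, q, hq⟩ := SimpleGraph.Walk.not_nil_iff.mp hnnil
  have hqpath : q.IsPath := by
    have := T.pth_isPath v T.root
    rw [hq] at this
    exact this.of_cons
  have hqeq : q = T.pth x T.root := T.pth_eq hqpath
  have hvnot : v ∉ q.support := by
    have := T.pth_isPath v T.root
    rw [hq] at this
    exact ((SimpleGraph.Walk.cons_isPath_iff _ _).mp this).2
  have hlex : T.le v x := by
    show x ∈ (T.pth v T.root).support
    rw [hq, SimpleGraph.Walk.support_cons]
    exact List.mem_cons_of_mem _ (hqeq ▸ SimpleGraph.Walk.start_mem_support q)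
  have hxv : x ≠ v := by
    intro hxv
    exact hvnot (hxv ▸ SimpleGraph.Walk.start_mem_support q)
  have hwx : T.le w x := (hall x hlex).resolve_left hxv
  have hxw : T.le x w := by
    have hw : w ∈ (T.pth v T.root).support := hle
    rw [hq, SimpleGraph.Walk.support_cons] at hw
    rcases List.mem_cons.mp hw with h1 | h1
    · exact absurd h1.symm hne
    · rw [hqeq] at h1; exact h1
  have : x = w := T.le_antisymm hxw hwx
  rw [← this]
  exact hadj

lemma ancestral_neighbor_unique {v w1 w2 : T.V} (h1 : T.G.Adj v w1) (h2 : T.G.Adj v w2)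
    (hle1 : T.le v w1) (hle2 : T.le v w2) : w1 = w2 := by
  have p1 := T.adj_parent h1 hle1
  have p2 := T.adj_parent h2 hle2
  rcases p1.2.2 w2 hle2 with h | h
  · exact absurd h.symm h2.ne
  · rcases p2.2.2 w1 hle1 with h' | h'
    · exact absurd h'.symm h1.ne
    · exact T.le_antisymm h h'

/-- Every non-leaf vertex has two incomparable children. -/
lemma exists_two_children {v : T.V} (hv : v ∉ Set.range T.leaf) :
    ∃ u1 u2, u1 ≠ u2 ∧ T.G.Adj u1 v ∧ T.G.Adj u2 v ∧ T.le u1 v ∧ T.le u2 v ∧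
      ¬ T.le v u1 ∧ ¬ T.le v u2 := by
  classical
  haveI := T.finV
  have hcard : 2 ≤ (T.G.neighborSet v).ncard := by
    by_cases hr : v = T.root
    · rw [hr, T.degRoot]
    · rw [T.degInt v hv hr]; omega
  set c : Set T.V := {w ∈ T.G.neighborSet v | ¬ T.le v w} with hc
  have hcc : 2 ≤ c.ncard := by
    by_cases hr : v = T.root
    · have : c = T.G.neighborSet v := by
        apply Set.eq_of_subset_of_subset (Set.sep_subset _ _)
        intro w hw
        refine ⟨hw, fun hle => ?_⟩
        have := T.le_root_eq (hr ▸ hle)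
        exact (T.G.ne_of_adj hw) (hr.trans this.symm)
      rw [this, hr, T.degRoot]
    · have h3 : (T.G.neighborSet v).ncard = 3 := T.degInt v hv hr
      by_contra hlt
      push_neg at hlt
      have hsub : T.G.neighborSet v ⊆ c ∪ {w ∈ T.G.neighborSet v | T.le v w} := by
        intro w hw
        by_cases h : T.le v w
        · exact Or.inr ⟨hw, h⟩
        · exact Or.inl ⟨hw, h⟩
      have hanc : ({w ∈ T.G.neighborSet v | T.le v w}).ncard ≤ 1 := by
        rw [Set.ncard_le_one_iff (Set.toFinite _)]
        rintro a b ⟨ha1, ha2⟩ ⟨hb1, hb2⟩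
        exact T.ancestral_neighbor_unique ha1 hb1 ha2 hb2
      have := Set.ncard_le_ncard hsub (Set.toFinite _)
      have h4 := Set.ncard_union_le c {w ∈ T.G.neighborSet v | T.le v w}
      omega
  obtain ⟨u1, hu1, u2, hu2, hne⟩ := (Set.one_lt_ncard (Set.toFinite c)).mp (by omega)
  have ha1 : T.G.Adj u1 v := (T.G.adj_symm hu1.1)
  have ha2 : T.G.Adj u2 v := (T.G.adj_symm hu2.1)
  have hl1 : T.le u1 v := (T.adj_le_or ha1).resolve_right hu1.2
  have hl2 : T.le u2 v := (T.adj_le_or ha2).resolve_right hu2.2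
  exact ⟨u1, u2, hne, ha1, ha2, hl1, hl2, hu1.2, hu2.2⟩

/-- Below every vertex there is a leaf. -/
lemma exists_leaf_le (v : T.V) : ∃ x : X, T.le (T.leaf x) v := by
  classical
  haveI := T.finV
  suffices H : ∀ n (v : T.V), ({w | T.le w v}).ncard ≤ n → ∃ x : X, T.le (T.leaf x) v by
    exact H _ v le_rfl
  intro n
  induction n with
  | zero =>
    intro v hle
    have : v ∈ {w | T.le w v} := T.le_refl v
    have := Set.ncard_pos (Set.toFinite _) |>.mpr ⟨v, this⟩
    omega
  | succ n ih =>
    intro v hle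
    by_cases hv : v ∈ Set.range T.leaf
    · obtain ⟨x, rfl⟩ := hv
      exact ⟨x, T.le_refl _⟩
    · obtain ⟨u1, _, _, _, _, hl1, _, hnl1, _⟩ := T.exists_two_children hv
      have hssub : {w | T.le w u1} ⊂ {w | T.le w v} := by
        constructor
        · intro w hw
          exact T.le_trans hw hl1
        · intro hsub
          exact hnl1 (hsub (T.le_refl v))
      have hlt := Set.ncard_lt_ncard hssub (Set.toFinite _)
      obtain ⟨x, hx⟩ := ih u1 (by omega)
      exact ⟨x, T.le_trans hx hl1⟩

/-- Every vertex is the mrca of a pair of leaves. -/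
lemma exists_mrca_pair (v : T.V) :
    ∃ x y : X, T.mrca (T.leaf x) (T.leaf y) = v ∧ (x = y ↔ v ∈ Set.range T.leaf) := by
  classical
  by_cases hv : v ∈ Set.range T.leaf
  · obtain ⟨x, rfl⟩ := hv
    exact ⟨x, x, T.mrca_self _, by simp⟩
  · obtain ⟨u1, u2, hne, ha1, ha2, hl1, hl2, hnl1, hnl2⟩ := T.exists_two_children hv
    have hincomp : ∀ w, ¬ (T.le w u1 ∧ T.le w u2) := by
      rintro w ⟨hw1, hw2⟩
      rcases T.le_total_of_le hw1 hw2 with h | h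
      · rcases (T.adj_parent ha1 hl1).2.2 u2 h with h' | h'
        · exact hne h'.symm
        · exact hnl2 h'
      · rcases (T.adj_parent ha2 hl2).2.2 u1 h with h' | h'
        · exact hne h'
        · exact hnl1 h'
    obtain ⟨x, hx⟩ := T.exists_leaf_le u1
    obtain ⟨y, hy⟩ := T.exists_leaf_le u2
    have hxy : x ≠ y := by
      rintro rfl
      exact hincomp (T.leaf x) ⟨hx, hy⟩
    have hmrca : T.isMrca (T.leaf x) (T.leaf y) v := by
      refine ⟨T.le_trans hx hl1, T.le_trans hy hl2, fun w hw1 hw2 => ?_⟩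
      rcases T.le_total_of_le hx hw1 with h1 | h1
      · -- le u1 w
        rcases (T.adj_parent ha1 hl1).2.2 w h1 with h' | h'
        · subst h'
          exact absurd ⟨hw2, hy⟩ (hincomp (T.leaf y))
        · exact h'
      · -- le w u1
        exact absurd ⟨T.le_trans hw2 h1, hy⟩ (hincomp (T.leaf y))
    refine ⟨x, y, (T.isMrca_unique hmrca).symm, ?_⟩
    simp only [hxy, false_iff]
    exact hv
lemma adj_iff_parent {v w : T.V} : T.G.Adj v w ↔ T.parent v w ∨ T.parent w v := by
  constructor
  · intro h
    rcases T.adj_le_or h with hle | hle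
    · exact Or.inl (T.adj_parent h hle)
    · exact Or.inr (T.adj_parent h.symm hle)
  · rintro (h | h)
    · exact T.parent_adj h
    · exact (T.parent_adj h).symm

lemma mrca_le_iff {u v w : T.V} : T.le (T.mrca u v) w ↔ T.le u w ∧ T.le v w :=
  ⟨fun h => ⟨T.le_trans (T.le_mrca_left u v) h, T.le_trans (T.le_mrca_right u v) h⟩,
   fun h => T.mrca_le h.1 h.2⟩

lemma leaf_le_leaf_iff {x y : X} : T.le (T.leaf x) (T.leaf y) ↔ x = y := by
  constructor
  · intro h
    exact T.leafInj (T.le_leaf h)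
  · rintro rfl
    exact T.le_refl _

end BinPhylo

section Transfer

open BinPhylo

variable {X : Type} {T T' : BinPhylo X}

theorem leaf_le_mrca_transfer
    (hagree : ∀ a b c : X, a ≠ b → a ≠ c → b ≠ c → (T.trip a b c ↔ T'.trip a b c))
    (a c d : X) :
    T.le (T.leaf a) (T.mrca (T.leaf c) (T.leaf d)) ↔
      T'.le (T'.leaf a) (T'.mrca (T'.leaf c) (T'.leaf d)) := by
  by_cases hcd : c = d
  · subst hcd
    rw [T.mrca_self, T'.mrca_self, T.leaf_le_leaf_iff, T'.leaf_le_leaf_iff]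
  · by_cases hac : a = c
    · subst hac
      simp [T.le_mrca_left, T'.le_mrca_left]
    · by_cases had : a = d
      · subst had
        simp [T.le_mrca_right, T'.le_mrca_right]
      · have h1 := T.trip_iff c d a
        have h2 := T'.trip_iff c d a
        have h3 := hagree c d a hcd (Ne.symm hac) (Ne.symm had)
        constructor
        · intro h
          by_contra h'
          exact (h1.mp (h3.mpr (h2.mpr h'))) h
        · intro h
          by_contra h'
          exact (h2.mp (h3.mp (h1.mpr h'))) h

theorem mrca_le_mrca_transfer
    (hagree : ∀ a b c : X, a ≠ b → a ≠ c → b ≠ c → (T.trip a b c ↔ T'.trip a b c))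
    (a b c d : X) :
    T.le (T.mrca (T.leaf a) (T.leaf b)) (T.mrca (T.leaf c) (T.leaf d)) ↔
      T'.le (T'.mrca (T'.leaf a) (T'.leaf b)) (T'.mrca (T'.leaf c) (T'.leaf d)) := by
  rw [T.mrca_le_iff, T'.mrca_le_iff, leaf_le_mrca_transfer hagree a c d,
    leaf_le_mrca_transfer hagree b c d]

end Transfer


/-- Two rooted binary phylogenetic trees on the same leaf set `X`, `|X| ≥ 3`,
that induce the same triple topology on every set of three distinct leaves are
isomorphic as leaf-labelled rooted trees. -/
theorem stmt6 {X : Type} [Fintype X] (hX : 3 ≤ Fintype.card X)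
    (T T' : BinPhylo X)
    (hagree : ∀ a b c : X, a ≠ b → a ≠ c → b ≠ c → (T.trip a b c ↔ T'.trip a b c)) :
    ∃ φ : T.G ≃g T'.G, φ T.root = T'.root ∧ ∀ x : X, φ (T.leaf x) = T'.leaf x := by
  classical
  obtain ⟨f, g, hfg, -⟩ : ∃ f g : T.V → X,
      (∀ v, T.mrca (T.leaf (f v)) (T.leaf (g v)) = v) ∧ True := by
    choose f g h1 _h2 using T.exists_mrca_pair
    exact ⟨f, g, h1, trivial⟩
  obtain ⟨f', g', hfg', -⟩ : ∃ f' g' : T'.V → X,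
      (∀ v, T'.mrca (T'.leaf (f' v)) (T'.leaf (g' v)) = v) ∧ True := by
    choose f g h1 _h2 using T'.exists_mrca_pair
    exact ⟨f, g, h1, trivial⟩
  set φf : T.V → T'.V := fun v => T'.mrca (T'.leaf (f v)) (T'.leaf (g v)) with hφf
  set ψf : T'.V → T.V := fun v => T.mrca (T.leaf (f' v)) (T.leaf (g' v)) with hψf
  have key := mrca_le_mrca_transfer hagree
  have keyEq : ∀ a b c d : X, T.mrca (T.leaf a) (T.leaf b) = T.mrca (T.leaf c) (T.leaf d) ↔
      T'.mrca (T'.leaf a) (T'.leaf b) = T'.mrca (T'.leaf c) (T'.leaf d) := by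
    intro a b c d
    constructor
    · intro h
      exact T'.le_antisymm ((key a b c d).mp (h ▸ T.le_refl _))
        ((key c d a b).mp (h ▸ T.le_refl _))
    · intro h
      exact T.le_antisymm ((key a b c d).mpr (h ▸ T'.le_refl _))
        ((key c d a b).mpr (h ▸ T'.le_refl _))
  have hle : ∀ u v : T.V, T.le u v ↔ T'.le (φf u) (φf v) := by
    intro u v
    have h1 : T.le u v ↔ T.le (T.mrca (T.leaf (f u)) (T.leaf (g u)))
        (T.mrca (T.leaf (f v)) (T.leaf (g v))) := by rw [hfg u, hfg v]
    rw [h1]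
    exact key (f u) (g u) (f v) (g v)
  have hψφ : ∀ v : T.V, ψf (φf v) = v := by
    intro v
    have h1 : T'.mrca (T'.leaf (f' (φf v))) (T'.leaf (g' (φf v)))
        = T'.mrca (T'.leaf (f v)) (T'.leaf (g v)) := hfg' (φf v)
    have h2 := (keyEq (f' (φf v)) (g' (φf v)) (f v) (g v)).mpr h1
    show T.mrca (T.leaf (f' (φf v))) (T.leaf (g' (φf v))) = v
    rw [h2, hfg v]
  have hφψ : ∀ v : T'.V, φf (ψf v) = v := by
    intro v
    have h1 : T.mrca (T.leaf (f (ψf v))) (T.leaf (g (ψf v)))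
        = T.mrca (T.leaf (f' v)) (T.leaf (g' v)) := hfg (ψf v)
    have h2 := (keyEq (f (ψf v)) (g (ψf v)) (f' v) (g' v)).mp h1
    show T'.mrca (T'.leaf (f (ψf v))) (T'.leaf (g (ψf v))) = v
    rw [h2, hfg' v]
  have hinj : ∀ u v : T.V, φf u = φf v → u = v := by
    intro u v h
    have := congrArg ψf h
    rwa [hψφ, hψφ] at this
  have hle' : ∀ u' v' : T'.V, T'.le u' v' ↔ T.le (ψf u') (ψf v') := by
    intro u' v'
    rw [hle (ψf u') (ψf v'), hφψ, hφψ]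
  have hpar : ∀ u v : T.V, T.parent u v ↔ T'.parent (φf u) (φf v) := by
    intro u v
    constructor
    · rintro ⟨h1, h2, h3⟩
      refine ⟨(hle u v).mp h1, fun h => h2 (hinj _ _ h), fun w' hw' => ?_⟩
      have hw'' : T.le u (ψf w') := by
        rw [hle u (ψf w'), hφψ]
        exact hw'
      rcases h3 (ψf w') hw'' with h | h
      · left
        rw [← hφψ w', h]
      · right
        have := (hle v (ψf w')).mp h
        rwa [hφψ] at this
    · rintro ⟨h1, h2, h3⟩
      refine ⟨(hle u v).mpr h1, fun h => h2 (congrArg φf h), fun w hw => ?_⟩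
      rcases h3 (φf w) ((hle u w).mp hw) with h | h
      · exact Or.inl (hinj _ _ h)
      · exact Or.inr ((hle v w).mpr h)
  have hadj : ∀ u v : T.V, T.G.Adj u v ↔ T'.G.Adj (φf u) (φf v) := by
    intro u v
    rw [T.adj_iff_parent, T'.adj_iff_parent, hpar u v, hpar v u]
  refine ⟨⟨⟨φf, ψf, hψφ, hφψ⟩, ?_⟩, ?_, ?_⟩
  · intro a b
    exact (hadj a b).symm
  · show φf T.root = T'.root
    refine T'.le_antisymm (T'.le_root _) ?_
    have := (hle (ψf T'.root) T.root).mp (T.le_root _)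
    rwa [hφψ] at this
  · intro x
    show φf (T.leaf x) = T'.leaf x
    have h1 := hfg (T.leaf x)
    have hf : f (T.leaf x) = x := by
      apply T.leafInj
      apply T.le_leaf
      have := T.le_mrca_left (T.leaf (f (T.leaf x))) (T.leaf (g (T.leaf x)))
      rwa [h1] at this
    have hg : g (T.leaf x) = x := by
      apply T.leafInj
      apply T.le_leaf
      have := T.le_mrca_right (T.leaf (f (T.leaf x))) (T.leaf (g (T.leaf x)))
      rwa [h1] at this
    show T'.mrca (T'.leaf (f (T.leaf x))) (T'.leaf (g (T.leaf x))) = T'.leaf x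
    rw [hf, hg, T'.mrca_self]
end

section
/- Let F be a forest of an X-tree and E a set of edges of F such that F − E is an agreement forest of trees T₁,...,T_k, and suppose F − (E \ {f} ∪ S) is isomorphic (as a leaf-labeled forest after contractions) to a subforest of F − E for some f ∈ E and some edge set S with f ∉ S. Then e(F − S, T₂,...,T_k) ≤ |E| − 1, where e(G, T₂,...,T_k) is the minimum number of edges to delete from G to obtain an agreement forest of all k trees. -/
open SimpleGraph

/-- `P` is an agreement forest of the trees `Ts`: a partition of the leaf set whose
blocks span pairwise vertex-disjoint subtrees in each tree and induce the same
(triple-wise) topology in all trees. -/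
def IsAgreementForest {X : Type} {k : ℕ} (Ts : Fin k → BinPhylo X) (P : Set (Set X)) : Prop :=
  Setoid.IsPartition P ∧
  (∀ i : Fin k, ∀ L ∈ P, ∀ L' ∈ P, L ≠ L' → Disjoint ((Ts i).span L) ((Ts i).span L')) ∧
  (∀ i j : Fin k, ∀ L ∈ P, ∀ a ∈ L, ∀ b ∈ L, ∀ c ∈ L,
    a ≠ b → a ≠ c → b ≠ c → ((Ts i).trip a b c ↔ (Ts j).trip a b c))

/-- The partition of the leaf set induced by deleting the edge set `E` from `T`. -/
def forestPartition {X : Type} (T : BinPhylo X) (E : Set (Sym2 T.V)) : Set (Set X) :=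
  {L | ∃ x : X, L = {y | (T.G.deleteEdges E).Reachable (T.leaf x) (T.leaf y)}}

/-- `e(F, T₂, …, T_k)`: the minimum number of edges that must be deleted from the
forest `F = T₁ − D` so that the induced partition is an agreement forest of all trees. -/
noncomputable def cutNumber {X : Type} {k : ℕ} (Ts : Fin (k + 1) → BinPhylo X)
    (D : Set (Sym2 (Ts 0).V)) : ℕ :=
  sInf {m | ∃ E : Finset (Sym2 (Ts 0).V), E.card = m ∧
    IsAgreementForest Ts (forestPartition (Ts 0) (D ∪ ↑E))}

/-! ### Auxiliary tree lemmas -/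

set_option linter.unusedSectionVars false

namespace TreeAux

variable {V : Type*} [DecidableEq V] {G : SimpleGraph V}

/-- The canonical path between two vertices of a tree. -/
noncomputable def tpath (hG : G.IsTree) (u v : V) : G.Walk u v :=
  (hG.existsUnique_path u v).exists.choose

lemma tpath_isPath (hG : G.IsTree) (u v : V) : (tpath hG u v).IsPath :=
  (hG.existsUnique_path u v).exists.choose_spec

lemma eq_tpath (hG : G.IsTree) {u v : V} {p : G.Walk u v} (hp : p.IsPath) :
    p = tpath hG u v :=
  (hG.existsUnique_path u v).unique hp (tpath_isPath hG u v)

lemma support_tpath_subset (hG : G.IsTree) {u v : V} (W : G.Walk u v) :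
    (tpath hG u v).support ⊆ W.support := by
  rw [← eq_tpath hG W.bypass_isPath]
  exact W.support_bypass_subset

lemma tpath_sub_of_mem (hG : G.IsTree) {c d x y : V} {q : G.Walk c d}
    (hx : x ∈ q.support) (hy : y ∈ q.support) :
    (tpath hG x y).support ⊆ q.support := by
  intro v hv
  have h := support_tpath_subset hG (((q.takeUntil x hx).reverse).append (q.takeUntil y hy)) hv
  rw [SimpleGraph.Walk.mem_support_append_iff] at h
  rcases h with h | h
  · rw [SimpleGraph.Walk.support_reverse, List.mem_reverse] at h
    exact q.support_takeUntil_subset hx h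
  · exact q.support_takeUntil_subset hy h

lemma tpath_triangle (hG : G.IsTree) {x y z : V} (W1 : G.Walk x y) (W2 : G.Walk y z)
    {v : V} (hv : v ∈ (tpath hG x z).support) :
    v ∈ W1.support ∨ v ∈ W2.support := by
  have h := support_tpath_subset hG (W1.append W2) hv
  rwa [SimpleGraph.Walk.mem_support_append_iff] at h

lemma anc_antisymm (hG : G.IsTree) {r u w : V}
    (hu : u ∈ (tpath hG w r).support) (hw : w ∈ (tpath hG u r).support) : u = w := by
  by_contra hne
  set p := tpath hG w r with hp_def
  have hp : p.IsPath := tpath_isPath hG w r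
  have hdrop : (p.dropUntil u hu).IsPath := hp.dropUntil hu
  rw [← eq_tpath hG hdrop] at hw
  have hnodup : ((p.takeUntil u hu).append (p.dropUntil u hu)).support.Nodup := by
    rw [p.take_spec hu]; exact hp.support_nodup
  rw [SimpleGraph.Walk.support_append, List.nodup_append] at hnodup
  have h1 : w ∈ (p.takeUntil u hu).support := SimpleGraph.Walk.start_mem_support _
  have h2 : w ∈ (p.dropUntil u hu).support.tail := by
    have hc := (p.dropUntil u hu).support_eq_cons
    rw [hc, List.mem_cons] at hw
    rcases hw with hw | hw
    · exact absurd hw.symm hne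
    · exact hw
  exact hnodup.2.2 w h1 w h2 rfl

/-- A vertex of degree `1` cannot lie strictly inside a path. -/
lemma leaf_not_internal {x u w : V} (q : G.Walk u w) (hq : q.IsPath)
    (hv : x ∈ q.support) (h1 : x ≠ u) (h2 : x ≠ w)
    (hdeg : (G.neighborSet x).ncard = 1) : False := by
  set q1 := q.takeUntil x hv with hq1
  set q2 := q.dropUntil x hv with hq2
  have hn1 : ¬ q1.reverse.Nil := SimpleGraph.Walk.not_nil_of_ne h1
  have hn2 : ¬ q2.Nil := SimpleGraph.Walk.not_nil_of_ne h2
  have ha1 : G.Adj x (q1.reverse.getVert 1) := SimpleGraph.Walk.adj_snd hn1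
  have ha2 : G.Adj x (q2.getVert 1) := SimpleGraph.Walk.adj_snd hn2
  have hm1 : q1.reverse.getVert 1 ∈ q1.support := by
    have h : q1.reverse.getVert 1 ∈ q1.reverse.support :=
      SimpleGraph.Walk.mem_support_iff_exists_getVert.mpr
        ⟨1, rfl, by rwa [SimpleGraph.Walk.not_nil_iff_lt_length] at hn1⟩
    rwa [SimpleGraph.Walk.support_reverse, List.mem_reverse] at h
  have hm2 : q2.getVert 1 ∈ q2.support.tail := by
    have hmem : q2.getVert 1 ∈ q2.support :=
      SimpleGraph.Walk.mem_support_iff_exists_getVert.mpr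
        ⟨1, rfl, by rwa [SimpleGraph.Walk.not_nil_iff_lt_length] at hn2⟩
    rw [q2.support_eq_cons, List.mem_cons] at hmem
    rcases hmem with hmem | hmem
    · exact absurd (hmem ▸ ha2) (G.irrefl)
    · exact hmem
  have hnodup : (q1.append q2).support.Nodup := by
    rw [q.take_spec hv]; exact hq.support_nodup
  rw [SimpleGraph.Walk.support_append, List.nodup_append] at hnodup
  have hne12 : q1.reverse.getVert 1 ≠ q2.getVert 1 := by
    intro h
    exact hnodup.2.2 _ hm1 _ hm2 h
  obtain ⟨a, ha⟩ := Set.ncard_eq_one.mp hdeg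
  have e1 : q1.reverse.getVert 1 ∈ G.neighborSet x := ha1
  have e2 : q2.getVert 1 ∈ G.neighborSet x := ha2
  rw [ha] at e1 e2
  exact hne12 (e1.trans e2.symm)

end TreeAux

/-! ### Canonical reformulations for `BinPhylo` -/

open TreeAux

namespace BinPhylo

variable {X : Type}

lemma trip_iff' (T : BinPhylo X) [DecidableEq T.V] (a b c : X) :
    T.trip a b c ↔ ∀ v ∈ (tpath T.tree (T.leaf c) T.root).support,
      v ∉ (tpath T.tree (T.leaf a) (T.leaf b)).support := by
  constructor
  · rintro ⟨p, q, hp, hq, hd⟩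
    rw [← eq_tpath T.tree hp, ← eq_tpath T.tree hq]
    exact hd
  · intro h
    exact ⟨_, _, tpath_isPath _ _ _, tpath_isPath _ _ _, h⟩

lemma mem_span_iff' (T : BinPhylo X) [DecidableEq T.V] (L : Set X) (v : T.V) :
    v ∈ T.span L ↔ ∃ a ∈ L, ∃ b ∈ L, v ∈ (tpath T.tree (T.leaf a) (T.leaf b)).support := by
  constructor
  · rintro ⟨a, ha, b, hb, p, hp, hv⟩
    exact ⟨a, ha, b, hb, by rwa [eq_tpath T.tree hp] at hv⟩
  · rintro ⟨a, ha, b, hb, hv⟩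
    exact ⟨a, ha, b, hb, _, tpath_isPath _ _ _, hv⟩

/-- If `ab|c` and `ab|d`, then the paths `a–b` and `c–d` are vertex-disjoint. -/
lemma not_both (T : BinPhylo X) [DecidableEq T.V] {a b c d : X}
    (h1 : T.trip a b c) (h2 : T.trip a b d) {v : T.V}
    (hv1 : v ∈ (tpath T.tree (T.leaf a) (T.leaf b)).support)
    (hv2 : v ∈ (tpath T.tree (T.leaf c) (T.leaf d)).support) : False := by
  rw [T.trip_iff'] at h1 h2
  rcases tpath_triangle T.tree (tpath T.tree (T.leaf c) T.root)
      (tpath T.tree (T.leaf d) T.root).reverse hv2 with h | h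
  · exact h1 v h hv1
  · rw [SimpleGraph.Walk.support_reverse, List.mem_reverse] at h
    exact h2 v h hv1

end BinPhylo

/-! ### Lemmas about `forestPartition` -/

section ForestPartition

variable {X : Type}

lemma forestPartition_isPartition (T : BinPhylo X) (A : Set (Sym2 T.V)) :
    Setoid.IsPartition (forestPartition T A) := by
  constructor
  · rintro ⟨x, hx⟩
    have : x ∈ (∅ : Set X) := by
      rw [hx]
      exact Set.mem_setOf.mpr (Reachable.refl _)
    exact this
  · intro a
    refine ⟨{y | (T.G.deleteEdges A).Reachable (T.leaf a) (T.leaf y)},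
      ⟨⟨a, rfl⟩, Reachable.refl _⟩, ?_⟩
    rintro L ⟨⟨x, rfl⟩, ha⟩
    have hax : (T.G.deleteEdges A).Reachable (T.leaf x) (T.leaf a) := ha
    ext y
    simp only [Set.mem_setOf_eq]
    exact ⟨fun h => hax.symm.trans h, fun h => hax.trans h⟩

lemma forestPartition_blocks_eq {T : BinPhylo X} {A : Set (Sym2 T.V)} {L1 L2 : Set X}
    (h1 : L1 ∈ forestPartition T A) (h2 : L2 ∈ forestPartition T A) {y : X}
    (hy1 : y ∈ L1) (hy2 : y ∈ L2) : L1 = L2 := by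
  obtain ⟨x1, rfl⟩ := h1
  obtain ⟨x2, rfl⟩ := h2
  have r1 : (T.G.deleteEdges A).Reachable (T.leaf x1) (T.leaf y) := hy1
  have r2 : (T.G.deleteEdges A).Reachable (T.leaf x2) (T.leaf y) := hy2
  ext z
  simp only [Set.mem_setOf_eq]
  exact ⟨fun h => (r2.trans r1.symm).trans h, fun h => (r1.trans r2.symm).trans h⟩

lemma forestPartition_refine {T : BinPhylo X} {A B : Set (Sym2 T.V)} (hAB : A ⊆ B)
    {L : Set X} (hL : L ∈ forestPartition T B) :
    ∃ L', L' ∈ forestPartition T A ∧ L ⊆ L' := by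
  obtain ⟨x, rfl⟩ := hL
  exact ⟨_, ⟨x, rfl⟩, fun y hy => Reachable.mono (T.G.deleteEdges_anti hAB) hy⟩

lemma span_mono (T : BinPhylo X) {L L' : Set X} (h : L ⊆ L') : T.span L ⊆ T.span L' := by
  rintro v ⟨a, ha, b, hb, p, hp, hv⟩
  exact ⟨a, h ha, b, h hb, p, hp, hv⟩

/-- Vertices of a block's span are reachable (in the deleted graph) from the
block's defining leaf. -/
lemma span_reachable {T : BinPhylo X} [DecidableEq T.V] {A : Set (Sym2 T.V)} {x : X} {v : T.V}
    (hv : v ∈ T.span {y | (T.G.deleteEdges A).Reachable (T.leaf x) (T.leaf y)}) :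
    (T.G.deleteEdges A).Reachable (T.leaf x) v := by
  rw [T.mem_span_iff'] at hv
  obtain ⟨a, ha, b, hb, hv⟩ := hv
  have hab : (T.G.deleteEdges A).Reachable (T.leaf a) (T.leaf b) :=
    (Reachable.symm ha).trans hb
  obtain ⟨w⟩ := hab
  have hW : ∀ e ∈ w.edges, e ∈ T.G.edgeSet := fun e he =>
    edgeSet_mono (T.G.deleteEdges_le A) (w.edges_subset_edgeSet he)
  have hsupp : v ∈ w.support := by
    have := support_tpath_subset T.tree (w.transfer T.G hW) hv
    rwa [SimpleGraph.Walk.support_transfer] at this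
  exact (ha : (T.G.deleteEdges A).Reachable _ _).trans (w.takeUntil v hsupp).reachable

/-- Distinct blocks of a forest partition have disjoint spans in the underlying tree. -/
lemma forestPartition_span_disjoint {T : BinPhylo X} [DecidableEq T.V] {A : Set (Sym2 T.V)}
    {L1 L2 : Set X} (h1 : L1 ∈ forestPartition T A) (h2 : L2 ∈ forestPartition T A)
    {v : T.V} (hv1 : v ∈ T.span L1) (hv2 : v ∈ T.span L2) : L1 = L2 := by
  obtain ⟨x1, rfl⟩ := h1
  obtain ⟨x2, rfl⟩ := h2
  have r1 := span_reachable hv1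
  have r2 := span_reachable hv2
  have r : (T.G.deleteEdges A).Reachable (T.leaf x1) (T.leaf x2) := r1.trans r2.symm
  ext z
  simp only [Set.mem_setOf_eq]
  exact ⟨fun h => r.symm.trans h, fun h => r.trans h⟩

end ForestPartition

/-! ### The main refinement lemma -/

/-- A refinement (by further edge deletions) of an agreement forest that is itself a
forest partition of the first tree remains an agreement forest. -/
lemma agreement_of_refine {X : Type} {k : ℕ} (Ts : Fin (k + 1) → BinPhylo X)
    {A B : Set (Sym2 (Ts 0).V)} (hAB : A ⊆ B)
    (hA : IsAgreementForest Ts (forestPartition (Ts 0) A)) :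
    IsAgreementForest Ts (forestPartition (Ts 0) B) := by
  classical
  obtain ⟨hpart, hdisj, htrip⟩ := hA
  refine ⟨forestPartition_isPartition _ _, ?_, ?_⟩
  swap
  · intro i j L hL a ha b hb c hc hab hac hbc
    obtain ⟨B1, hB1, hs⟩ := forestPartition_refine hAB hL
    exact htrip i j B1 hB1 a (hs ha) b (hs hb) c (hs hc) hab hac hbc
  intro i L1 h1 L2 h2 hne
  obtain ⟨B1, hB1, hs1⟩ := forestPartition_refine hAB h1
  obtain ⟨B2, hB2, hs2⟩ := forestPartition_refine hAB h2
  by_cases hBB : B1 = B2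
  swap
  · exact ((hdisj i B1 hB1 B2 hB2 hBB).mono (span_mono (Ts i) hs1) (span_mono (Ts i) hs2))
  subst hBB
  -- the hard case: both blocks refine the same block B1
  rw [Set.disjoint_left]
  intro v hv1 hv2
  -- blocks of the refined partition are pairwise disjoint as sets of leaves
  have hLL : ∀ y : X, y ∈ L1 → y ∉ L2 := fun y hy1 hy2 =>
    hne (forestPartition_blocks_eq h1 h2 hy1 hy2)
  rw [(Ts i).mem_span_iff'] at hv1 hv2
  obtain ⟨a, haL, b, hbL, hva⟩ := hv1
  obtain ⟨c, hcL, d, hdL, hvc⟩ := hv2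
  have hac : a ≠ c := fun h => hLL a haL (h ▸ hcL)
  have had : a ≠ d := fun h => hLL a haL (h ▸ hdL)
  have hbc : b ≠ c := fun h => hLL b hbL (h ▸ hcL)
  have hbd : b ≠ d := fun h => hLL b hbL (h ▸ hdL)
  -- dispose of degenerate cases using the degree-one condition on leaves
  by_cases hab : a = b
  · subst hab
    have hnil : (Walk.nil : (Ts i).G.Walk ((Ts i).leaf a) ((Ts i).leaf a)) =
        tpath (Ts i).tree ((Ts i).leaf a) ((Ts i).leaf a) :=
      eq_tpath (Ts i).tree (SimpleGraph.Walk.IsPath.nil)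
    rw [← hnil] at hva
    simp only [SimpleGraph.Walk.support_nil, List.mem_singleton] at hva
    subst hva
    exact TreeAux.leaf_not_internal _ (tpath_isPath (Ts i).tree _ _) hvc
      (fun h => hac ((Ts i).leafInj h)) (fun h => had ((Ts i).leafInj h))
      ((Ts i).degLeaf a)
  by_cases hcd : c = d
  · subst hcd
    have hnil : (Walk.nil : (Ts i).G.Walk ((Ts i).leaf c) ((Ts i).leaf c)) =
        tpath (Ts i).tree ((Ts i).leaf c) ((Ts i).leaf c) :=
      eq_tpath (Ts i).tree (SimpleGraph.Walk.IsPath.nil)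
    rw [← hnil] at hvc
    simp only [SimpleGraph.Walk.support_nil, List.mem_singleton] at hvc
    subst hvc
    exact TreeAux.leaf_not_internal _ (tpath_isPath (Ts i).tree _ _) hva
      (fun h => hac.symm ((Ts i).leafInj h)) (fun h => hbc.symm ((Ts i).leafInj h))
      ((Ts i).degLeaf c)
  -- main case: a, b, c, d pairwise distinct
  -- work in the tree T₀
  set T0 := Ts 0 with hT0
  set tr := T0.tree
  set l := T0.leaf
  set r := T0.root
  set S1 := (tpath tr (l a) (l b)).support with hS1def
  set S2 := (tpath tr (l c) (l d)).support with hS2def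
  have hS1span : ∀ w ∈ S1, w ∈ T0.span L1 := fun w hw =>
    (T0.mem_span_iff' L1 w).mpr ⟨a, haL, b, hbL, hw⟩
  have hS2span : ∀ w ∈ S2, w ∈ T0.span L2 := fun w hw =>
    (T0.mem_span_iff' L2 w).mpr ⟨c, hcL, d, hdL, hw⟩
  have hS12 : ∀ w, w ∈ S1 → w ∈ S2 → False := fun w hw1 hw2 =>
    hne (forestPartition_span_disjoint h1 h2 (hS1span w hw1) (hS2span w hw2))
  -- memberships in B1
  have haB : a ∈ B1 := hs1 haL
  have hbB : b ∈ B1 := hs1 hbL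
  have hcB : c ∈ B1 := hs2 hcL
  have hdB : d ∈ B1 := hs2 hdL
  by_cases hcase : (∀ w ∈ (tpath tr (l c) r).support, w ∉ S1) ∧
      (∀ w ∈ (tpath tr (l d) r).support, w ∉ S1)
  · -- triple ab|c and ab|d in T₀, transfer to Ts i
    have t1 : T0.trip a b c := (T0.trip_iff' a b c).mpr hcase.1
    have t2 : T0.trip a b d := (T0.trip_iff' a b d).mpr hcase.2
    have ti1 : (Ts i).trip a b c :=
      (htrip 0 i B1 hB1 a haB b hbB c hcB hab hac hbc).mp t1
    have ti2 : (Ts i).trip a b d :=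
      (htrip 0 i B1 hB1 a haB b hbB d hdB hab had hbd).mp t2
    exact (Ts i).not_both ti1 ti2 hva hvc
  · -- some root path from {c, d} meets S1
    have hex : ∃ c' : X, (c' = c ∨ c' = d) ∧
        ∃ u, u ∈ (tpath tr (l c') r).support ∧ u ∈ S1 := by
      rcases not_and_or.mp hcase with h | h
      · push_neg at h
        obtain ⟨u, hu1, hu2⟩ := h
        exact ⟨c, Or.inl rfl, u, hu1, hu2⟩
      · push_neg at h
        obtain ⟨u, hu1, hu2⟩ := h
        exact ⟨d, Or.inr rfl, u, hu1, hu2⟩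
    obtain ⟨c', hc', u, hu1, hu2⟩ := hex
    have hc'S2 : l c' ∈ S2 := by
      rcases hc' with rfl | rfl
      · exact SimpleGraph.Walk.start_mem_support _
      · exact SimpleGraph.Walk.end_mem_support _
    -- then no root path from {a, b} meets S2
    have hgood : (∀ w ∈ (tpath tr (l a) r).support, w ∉ S2) ∧
        (∀ w ∈ (tpath tr (l b) r).support, w ∉ S2) := by
      by_contra hbad
      have hex2 : ∃ a' : X, (a' = a ∨ a' = b) ∧
          ∃ w, w ∈ (tpath tr (l a') r).support ∧ w ∈ S2 := by
        rcases not_and_or.mp hbad with h | h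
        · push_neg at h
          obtain ⟨w, hw1, hw2⟩ := h
          exact ⟨a, Or.inl rfl, w, hw1, hw2⟩
        · push_neg at h
          obtain ⟨w, hw1, hw2⟩ := h
          exact ⟨b, Or.inr rfl, w, hw1, hw2⟩
      obtain ⟨a', ha', w, hw1, hw2⟩ := hex2
      have ha'S1 : l a' ∈ S1 := by
        rcases ha' with rfl | rfl
        · exact SimpleGraph.Walk.start_mem_support _
        · exact SimpleGraph.Walk.end_mem_support _
      have hcw : (tpath tr (l c') w).support ⊆ S2 :=
        tpath_sub_of_mem tr hc'S2 hw2
      have hau : (tpath tr (l a') u).support ⊆ S1 :=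
        tpath_sub_of_mem tr ha'S1 hu2
      have hu3 : u ∈ (tpath tr w r).support := by
        rcases tpath_triangle tr (tpath tr (l c') w) (tpath tr w r) hu1 with h | h
        · exact absurd (hcw h) (fun hs => hS12 u hu2 hs)
        · exact h
      have hw3 : w ∈ (tpath tr u r).support := by
        rcases tpath_triangle tr (tpath tr (l a') u) (tpath tr u r) hw1 with h | h
        · exact absurd (hau h) (fun hs => hS12 w hs hw2)
        · exact h
      have huw : u = w := anc_antisymm tr hu3 hw3
      exact hS12 u hu2 (huw ▸ hw2)
    -- triple cd|a and cd|b in T₀, transfer to Ts i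
    have t1 : T0.trip c d a := (T0.trip_iff' c d a).mpr hgood.1
    have t2 : T0.trip c d b := (T0.trip_iff' c d b).mpr hgood.2
    have ti1 : (Ts i).trip c d a :=
      (htrip 0 i B1 hB1 c hcB d hdB a haB hcd hac.symm had.symm).mp t1
    have ti2 : (Ts i).trip c d b :=
      (htrip 0 i B1 hB1 c hcB d hdB b hbB hcd hbc.symm hbd.symm).mp t2
    exact (Ts i).not_both ti1 ti2 hvc hva

/-- The abstract exchange argument of Lemma 2(i): if deleting `E` from the forest
`F = T₁ − D` yields an agreement forest of `T₁, …, T_k`, `f ∈ E`, `f ∉ S`, and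
`F − ((E \ {f}) ∪ S)` is isomorphic to a subforest of `F − E` (i.e. its induced
leaf partition coincides with that of `F − E` after some further edge deletions
`C`), then the minimum number of edge deletions turning `F − S` into an
agreement forest is at most `|E| − 1`. -/
theorem stmt19 {X : Type} {k : ℕ} (Ts : Fin (k + 1) → BinPhylo X)
    [DecidableEq (Sym2 (Ts 0).V)]
    (D : Set (Sym2 (Ts 0).V)) (E S : Finset (Sym2 (Ts 0).V))
    (f : Sym2 (Ts 0).V) (hfE : f ∈ E) (hfS : f ∉ S)
    (hAF : IsAgreementForest Ts (forestPartition (Ts 0) (D ∪ ↑E)))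
    (hiso : ∃ C : Set (Sym2 (Ts 0).V),
      forestPartition (Ts 0) (D ∪ ↑(E \ {f}) ∪ ↑S) =
        forestPartition (Ts 0) (D ∪ ↑E ∪ C)) :
    cutNumber Ts (D ∪ ↑S) + 1 ≤ E.card := by
  obtain ⟨C, hC⟩ := hiso
  have hsets : (D ∪ ↑S) ∪ (↑(E.erase f) : Set (Sym2 (Ts 0).V)) = D ∪ ↑(E \ {f}) ∪ ↑S := by
    rw [Finset.erase_eq]
    ext e
    simp only [Set.mem_union]
    tauto
  have hAF' : IsAgreementForest Ts
      (forestPartition (Ts 0) ((D ∪ ↑S) ∪ ↑(E.erase f))) := by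
    rw [hsets, hC]
    exact agreement_of_refine Ts Set.subset_union_left hAF
  have hle : cutNumber Ts (D ∪ ↑S) ≤ (E.erase f).card :=
    Nat.sInf_le ⟨E.erase f, rfl, hAF'⟩
  have hcard : (E.erase f).card = E.card - 1 := Finset.card_erase_of_mem hfE
  have hpos : 1 ≤ E.card := Finset.card_pos.mpr ⟨f, hfE⟩
  omega
end
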